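/- arXiv:2102.10831 — 2 statements merged into one kernel-verified Lean document; each statement's English description precedes it below -/
import Mathlib

section
/- Let n ≥ 1 be odd. Then ∑_{i=0}^{(n-1)/2} ∑_{j=2}^{(n+1)/2} C(i+j−2, i) = C(n, (n−1)/2) − 1. -/
/-- Hockey stick: `∑_{k<m} C(i+k, i) = C(i+m, i+1)`. -/
lemma hs (i m : ℕ) : ∑ k ∈ Finset.range m, Nat.choose (i + k) i
    = Nat.choose (i + m) (i + 1) := by
  induction m with
  | zero => simp [Nat.choose_eq_zero_of_lt]
  | succ m ih =>
      rw [Finset.sum_range_succ, ih, show i + (m + 1) = (i + m) + 1 by omega,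
        Nat.choose_succ_succ']
      omega

lemma reidx (f : ℕ → ℕ) (m : ℕ) :
    ∑ j ∈ Finset.Icc 2 (m + 1), f j = ∑ k ∈ Finset.range m, f (k + 2) := by
  induction m with
  | zero => simp
  | succ m ih =>
      rw [show m + 1 + 1 = (m + 1) + 1 from rfl,
        Finset.sum_Icc_succ_top (by omega), ih, Finset.sum_range_succ]

lemma aux (m : ℕ) : ∑ i ∈ Finset.range (m + 1), ∑ k ∈ Finset.range m,
    Nat.choose (i + k) i = Nat.choose (2 * m + 1) m - 1 := by
  cases m with
  | zero => simp
  | succ r =>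
      have h1 : ∀ i ∈ Finset.range (r + 2),
          ∑ k ∈ Finset.range (r + 1), Nat.choose (i + k) i
          = Nat.choose (r + (i + 1)) r := by
        intro i _
        rw [hs, show r + (i + 1) = i + (r + 1) by omega]
        exact Nat.choose_symm_of_eq_add (by omega)
      rw [Finset.sum_congr rfl h1]
      have h2 : ∑ k ∈ Finset.range (r + 3), Nat.choose (r + k) r
          = (∑ i ∈ Finset.range (r + 2), Nat.choose (r + (i + 1)) r) + 1 := by
        rw [Finset.sum_range_succ']
        simp
      have h3 : ∑ k ∈ Finset.range (r + 3), Nat.choose (r + k) r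
          = Nat.choose (r + (r + 3)) (r + 1) := hs r (r + 3)
      have h4 : Nat.choose (r + (r + 3)) (r + 1)
          = Nat.choose (2 * (r + 1) + 1) (r + 1) := by
        congr 1
        omega
      omega

/-- For odd `n ≥ 1`,
`∑_{i=0}^{(n-1)/2} ∑_{j=2}^{(n+1)/2} C(i+j−2, i) = C(n, (n−1)/2) − 1`. -/
theorem stmt_2 (n : ℕ) (hn : 1 ≤ n) (hodd : Odd n) :
    ∑ i ∈ Finset.range ((n - 1) / 2 + 1), ∑ j ∈ Finset.Icc 2 ((n + 1) / 2),
      Nat.choose (i + j - 2) i = Nat.choose n ((n - 1) / 2) - 1 := by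
  obtain ⟨m, rfl⟩ := hodd
  have e1 : (2 * m + 1 - 1) / 2 = m := by omega
  have e2 : (2 * m + 1 + 1) / 2 = m + 1 := by omega
  rw [e1, e2]
  have h1 : ∀ i ∈ Finset.range (m + 1),
      ∑ j ∈ Finset.Icc 2 (m + 1), Nat.choose (i + j - 2) i
      = ∑ k ∈ Finset.range m, Nat.choose (i + k) i := by
    intro i _
    rw [reidx]
    apply Finset.sum_congr rfl
    intro k _
    have : i + (k + 2) - 2 = i + k := by omega
    rw [this]
  rw [Finset.sum_congr rfl h1, aux]
end

section
/- Let n ≥ 2 be even. Then C(n, (n−2)/2) + 2·C(n, n/2) + C(n+1, n/2) − 3 equals the sum, over all pairs (p,q) with 0 ≤ p ≤ n, 0 ≤ q ≤ n, p+q > 1, of N⁺(p,q), plus 2, minus 1 (excluding one forbidden sequence), where N⁺(p,q) = C(γ⁺+γ⁻, γ⁺) summed over all nonnegative-integer solutions (β⁺,ε⁺,γ⁺,β⁻,ε⁻,γ⁻) to: β⁺+2γ⁺+ε⁺ = q, β⁻+2γ⁻+ε⁻ = p, β⁺β⁻ = 0, β⁺+β⁻ ≠ 0, β⁺,β⁻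 ∈ {0,1,2}, ε⁺ε⁻ = 0, ε⁺+ε⁻ = 1, β⁻ = 0. -/
lemma hockey (i b : ℕ) : ∑ j ∈ Finset.range b, Nat.choose (i+j) i = Nat.choose (i+b) (i+1) := by
  induction b with
  | zero => simp [Nat.choose_eq_zero_of_lt]
  | succ b ih =>
    rw [Finset.sum_range_succ, ih, ← Nat.add_assoc, Nat.choose_succ_succ (i+b) i]
    simp only [Nat.succ_eq_add_one] at *
    omega

lemma Dlem (a b : ℕ) :
    (∑ i ∈ Finset.range a, ∑ j ∈ Finset.range b, Nat.choose (i+j) i) + 1 = Nat.choose (a+b) a := by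
  induction a with
  | zero => simp
  | succ a ih =>
    rw [Finset.sum_range_succ, hockey, show a+1+b = (a+b)+1 from by ring,
      Nat.choose_succ_succ (a+b) a]
    simp only [Nat.succ_eq_add_one] at *
    omega

lemma comm3' {M : Type*} [AddCommMonoid M] (A B C : Finset ℕ) (f : ℕ → ℕ → ℕ → M) :
    (∑ a ∈ A, ∑ b ∈ B, ∑ c ∈ C, f a b c) = ∑ b ∈ B, ∑ c ∈ C, ∑ a ∈ A, f a b c := by
  rw [Finset.sum_comm]
  exact Finset.sum_congr rfl fun b _ => Finset.sum_comm ..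

lemma collapse (N e c : ℕ) (P : Prop) [Decidable P] :
    (∑ q ∈ Finset.range N, if e = q ∧ P then c else 0) = if e < N ∧ P then c else 0 := by
  by_cases hP : P
  · simp [hP, Finset.sum_ite_eq, Finset.mem_range]
  · simp [hP]

lemma collapse2 (N e c : ℕ) (P : Prop) [Decidable P] :
    (∑ p ∈ Finset.range N, if P ∧ e = p then c else 0) = if P ∧ e < N then c else 0 := by
  by_cases hP : P
  · simp [hP, Finset.sum_ite_eq, Finset.mem_range]
  · simp [hP]

lemma trunc (N a : ℕ) (h : a ≤ N) (f : ℕ → ℕ) :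
    (∑ i ∈ Finset.range N, if i < a then f i else 0) = ∑ i ∈ Finset.range a, f i := by
  rw [← Finset.sum_filter]
  congr 1
  ext x
  simp only [Finset.mem_filter, Finset.mem_range]
  omega

lemma trunc2 (N a b : ℕ) (ha : a ≤ N) (hb : b ≤ N) (f : ℕ → ℕ → ℕ) :
    (∑ i ∈ Finset.range N, ∑ j ∈ Finset.range N, if i < a ∧ j < b then f i j else 0)
    = ∑ i ∈ Finset.range a, ∑ j ∈ Finset.range b, f i j := by
  have key : ∀ i, (∑ j ∈ Finset.range N, if i < a ∧ j < b then f i j else 0)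
      = if i < a then (∑ j ∈ Finset.range b, f i j) else 0 := by
    intro i
    by_cases hi : i < a
    · simp only [hi, true_and]
      exact trunc N b hb _
    · simp [hi]
  rw [Finset.sum_congr rfl fun i _ => key i]
  exact trunc N a ha _

lemma pt (n p q : ℕ) :
    (if 1 < p + q then
        ∑ βp ∈ Finset.range 3, ∑ εp ∈ Finset.range 2, ∑ γp ∈ Finset.range (n + 1),
        ∑ βm ∈ Finset.range 3, ∑ εm ∈ Finset.range 2, ∑ γm ∈ Finset.range (n + 1),
          if βp + 2 * γp + εp = q ∧ βm + 2 * γm + εm = p ∧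
             βp * βm = 0 ∧ βp + βm ≠ 0 ∧ βp ≤ 2 ∧ βm ≤ 2 ∧
             εp * εm = 0 ∧ εp + εm = 1 ∧ βm = 0
          then Nat.choose (γp + γm) γp else 0
      else 0) =
    ∑ γp ∈ Finset.range (n + 1), ∑ γm ∈ Finset.range (n + 1),
      ((if 2*γp+2 = q ∧ 2*γm = p then Nat.choose (γp+γm) γp else 0)
      + ((if 2*γp+1 = q ∧ 2*γm+1 = p then Nat.choose (γp+γm) γp else 0)
      + ((if 2*γp+3 = q ∧ 2*γm = p then Nat.choose (γp+γm) γp else 0)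
      + (if 2*γp+2 = q ∧ 2*γm+1 = p then Nat.choose (γp+γm) γp else 0)))) := by
  have e3 : (3:ℕ) = 2+1 := rfl
  have e2r : (2:ℕ) = 1+1 := rfl
  by_cases h : 1 < p + q
  · rw [if_pos h]
    generalize Finset.range (n+1) = s
    rw [e3]
    simp only [e2r, Finset.sum_range_succ, Finset.sum_range_zero]
    simp
    simp only [← Finset.sum_add_distrib]
    apply Finset.sum_congr rfl; intro γp _
    apply Finset.sum_congr rfl; intro γm _
    split_ifs <;> omega
  · rw [if_neg h]
    symm
    apply Finset.sum_eq_zero; intro γp _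
    apply Finset.sum_eq_zero; intro γm _
    split_ifs <;> omega

/-- Closed-form count of candidate time-fuel optimal sequences for even `n`. -/
theorem stmt_3 (n : ℕ) (hn : 2 ≤ n) (he : Even n) :
    Nat.choose n ((n - 2) / 2) + 2 * Nat.choose n (n / 2) + Nat.choose (n + 1) (n / 2) - 3 =
    (∑ p ∈ Finset.range (n + 1), ∑ q ∈ Finset.range (n + 1),
      if 1 < p + q then
        ∑ βp ∈ Finset.range 3, ∑ εp ∈ Finset.range 2, ∑ γp ∈ Finset.range (n + 1),
        ∑ βm ∈ Finset.range 3, ∑ εm ∈ Finset.range 2, ∑ γm ∈ Finset.range (n + 1),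
          if βp + 2 * γp + εp = q ∧ βm + 2 * γm + εm = p ∧
             βp * βm = 0 ∧ βp + βm ≠ 0 ∧ βp ≤ 2 ∧ βm ≤ 2 ∧
             εp * εm = 0 ∧ εp + εm = 1 ∧ βm = 0
          then Nat.choose (γp + γm) γp else 0
      else 0) + 2 - 1 := by
  obtain ⟨m, hm⟩ := he
  subst hm
  have hm1 : 1 ≤ m := by omega
  have key :
      (∑ p ∈ Finset.range (m + m + 1), ∑ q ∈ Finset.range (m + m + 1),
        if 1 < p + q then
          ∑ βp ∈ Finset.range 3, ∑ εp ∈ Finset.range 2, ∑ γp ∈ Finset.range (m + m + 1),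
          ∑ βm ∈ Finset.range 3, ∑ εm ∈ Finset.range 2, ∑ γm ∈ Finset.range (m + m + 1),
            if βp + 2 * γp + εp = q ∧ βm + 2 * γm + εm = p ∧
               βp * βm = 0 ∧ βp + βm ≠ 0 ∧ βp ≤ 2 ∧ βm ≤ 2 ∧
               εp * εm = 0 ∧ εp + εm = 1 ∧ βm = 0
            then Nat.choose (γp + γm) γp else 0
        else 0) =
      (∑ i ∈ Finset.range m, ∑ j ∈ Finset.range (m+1), Nat.choose (i+j) i)
      + ((∑ i ∈ Finset.range m, ∑ j ∈ Finset.range m, Nat.choose (i+j) i)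
      + ((∑ i ∈ Finset.range (m-1), ∑ j ∈ Finset.range (m+1), Nat.choose (i+j) i)
      + (∑ i ∈ Finset.range m, ∑ j ∈ Finset.range m, Nat.choose (i+j) i))) := by
    calc
      _ = ∑ p ∈ Finset.range (m+m+1), ∑ q ∈ Finset.range (m+m+1),
            ∑ γp ∈ Finset.range (m+m+1), ∑ γm ∈ Finset.range (m+m+1),
            ((if 2*γp+2 = q ∧ 2*γm = p then Nat.choose (γp+γm) γp else 0)
            + ((if 2*γp+1 = q ∧ 2*γm+1 = p then Nat.choose (γp+γm) γp else 0)
            + ((if 2*γp+3 = q ∧ 2*γm = p then Nat.choose (γp+γm) γp else 0)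
            + (if 2*γp+2 = q ∧ 2*γm+1 = p then Nat.choose (γp+γm) γp else 0)))) := by
          refine Finset.sum_congr rfl fun p _ => Finset.sum_congr rfl fun q _ => ?_
          exact pt (m+m) p q
      _ = ∑ p ∈ Finset.range (m+m+1),
            ∑ γp ∈ Finset.range (m+m+1), ∑ γm ∈ Finset.range (m+m+1),
            ((if 2*γp+2 < m+m+1 ∧ 2*γm = p then Nat.choose (γp+γm) γp else 0)
            + ((if 2*γp+1 < m+m+1 ∧ 2*γm+1 = p then Nat.choose (γp+γm) γp else 0)
            + ((if 2*γp+3 < m+m+1 ∧ 2*γm = p then Nat.choose (γp+γm) γp else 0)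
            + (if 2*γp+2 < m+m+1 ∧ 2*γm+1 = p then Nat.choose (γp+γm) γp else 0)))) := by
          refine Finset.sum_congr rfl fun p _ => ?_
          rw [comm3']
          refine Finset.sum_congr rfl fun γp _ => Finset.sum_congr rfl fun γm _ => ?_
          simp only [Finset.sum_add_distrib, collapse]
      _ = ∑ γp ∈ Finset.range (m+m+1), ∑ γm ∈ Finset.range (m+m+1),
            ((if 2*γp+2 < m+m+1 ∧ 2*γm < m+m+1 then Nat.choose (γp+γm) γp else 0)
            + ((if 2*γp+1 < m+m+1 ∧ 2*γm+1 < m+m+1 then Nat.choose (γp+γm) γp else 0)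
            + ((if 2*γp+3 < m+m+1 ∧ 2*γm < m+m+1 then Nat.choose (γp+γm) γp else 0)
            + (if 2*γp+2 < m+m+1 ∧ 2*γm+1 < m+m+1 then Nat.choose (γp+γm) γp else 0)))) := by
          rw [comm3']
          refine Finset.sum_congr rfl fun γp _ => Finset.sum_congr rfl fun γm _ => ?_
          simp only [Finset.sum_add_distrib, collapse2]
      _ = ∑ γp ∈ Finset.range (m+m+1), ∑ γm ∈ Finset.range (m+m+1),
            ((if γp < m ∧ γm < m+1 then Nat.choose (γp+γm) γp else 0)
            + ((if γp < m ∧ γm < m then Nat.choose (γp+γm) γp else 0)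
            + ((if γp < m-1 ∧ γm < m+1 then Nat.choose (γp+γm) γp else 0)
            + (if γp < m ∧ γm < m then Nat.choose (γp+γm) γp else 0)))) := by
          refine Finset.sum_congr rfl fun γp _ => Finset.sum_congr rfl fun γm _ => ?_
          split_ifs <;> omega
      _ = _ := by
          simp only [Finset.sum_add_distrib]
          rw [trunc2 _ _ _ (by omega) (by omega), trunc2 _ _ _ (by omega) (by omega),
            trunc2 _ _ _ (by omega) (by omega)]
  rw [key]
  have d1 := Dlem m (m+1)
  have d2 := Dlem m m
  have d3 := Dlem (m-1) (m+1)
  rw [show m+(m+1) = m+m+1 from by ring] at d1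
  rw [show m-1+(m+1) = m+m from by omega] at d3
  have h1 : (m+m-2)/2 = m-1 := by omega
  have h2 : (m+m)/2 = m := by omega
  rw [h1, h2]
  omega
end
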